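/- arXiv:1810.04469 — 5 statements merged into one kernel-verified Lean document; each statement's English description precedes it below -/
import Mathlib

section
/- Let T be a densely defined closed paranormal operator on a complex Hilbert space H. If 0 is not in the spectrum of T (i.e., T is bijective with bounded inverse), then T⁻¹ is a bounded paranormal operator: ‖T⁻¹y‖² ≤ ‖T⁻²y‖·‖y‖ for all y ∈ H. -/
open scoped InnerProductSpace
open LinearPMap

noncomputable section

variable {H : Type*} [NormedAddCommGroup H] [InnerProductSpace ℂ H] [CompleteSpace H]

/-- `T` is paranormal: `‖Tx‖² ≤ ‖T²x‖ ‖x‖` for all `x ∈ D(T²)`. -/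
def Paranormal (T : H →ₗ.[ℂ] H) : Prop :=
  ∀ (x : T.domain) (h : T x ∈ T.domain), ‖T x‖ ^ 2 ≤ ‖T ⟨T x, h⟩‖ * ‖(x : H)‖

/-- The operator `T - μ • I`, with the same domain as `T`. -/
def shiftOp (T : H →ₗ.[ℂ] H) (μ : ℂ) : H →ₗ.[ℂ] H :=
  ⟨T.domain, T.toFun - μ • T.domain.subtype⟩

/-- `T` is bijective from its domain onto `H` with a bounded everywhere-defined inverse. -/
def HasBoundedInverse (T : H →ₗ.[ℂ] H) : Prop :=
  ∃ S : H →L[ℂ] H, (∀ y : H, ∃ hy : S y ∈ T.domain, T ⟨S y, hy⟩ = y) ∧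
    ∀ x : T.domain, S (T x) = (x : H)

/-- The spectrum of a (possibly unbounded) operator `T`. -/
def pSpectrum (T : H →ₗ.[ℂ] H) : Set ℂ :=
  {μ | ¬ HasBoundedInverse (shiftOp T μ)}

/-- `μ` is an isolated point of the spectrum of `T`. -/
def IsolatedSpectralPoint (T : H →ₗ.[ℂ] H) (μ : ℂ) : Prop :=
  μ ∈ pSpectrum T ∧ ∃ ε > 0, ∀ ν ∈ pSpectrum T, ν ≠ μ → ε ≤ dist ν μ

open Classical in
/-- The resolvent `(T - z)⁻¹` as a bounded operator (junk value `0` if `z ∈ σ(T)`). -/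
def resolventOp (T : H →ₗ.[ℂ] H) (z : ℂ) : H →L[ℂ] H :=
  if h : HasBoundedInverse (shiftOp T z) then h.choose else 0

/-- The Riesz projection `E_μ = (2πi)⁻¹ ∮_{|z-μ|=r} (z - T)⁻¹ dz`
(note `(z - T)⁻¹ = -(T - z)⁻¹`). -/
def rieszProjection (T : H →ₗ.[ℂ] H) (μ : ℂ) (r : ℝ) : H →L[ℂ] H :=
  -(2 * Real.pi * Complex.I)⁻¹ • ∮ z in C(μ, r), resolventOp T z

/-- The kernel `N(T - μ I)` as a subset of `H`. -/
def kernelSet (T : H →ₗ.[ℂ] H) (μ : ℂ) : Set H :=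
  {x | ∃ h : x ∈ T.domain, T ⟨x, h⟩ = μ • x}

/-- The range `R(T - μ I)` as a subset of `H`. -/
def rangeSet (T : H →ₗ.[ℂ] H) (μ : ℂ) : Set H :=
  Set.range fun x : T.domain => T x - μ • (x : H)


/-- If a densely defined closed paranormal operator has `0 ∉ σ(T)`, witnessed by a bounded
inverse `S = T⁻¹`, then `S` is paranormal. -/
theorem stmt1 (T : H →ₗ.[ℂ] H) (hdense : Dense (T.domain : Set H)) (hclosed : T.IsClosed)
    (hpara : Paranormal T) (S : H →L[ℂ] H)
    (hS1 : ∀ y : H, ∃ hy : S y ∈ T.domain, T ⟨S y, hy⟩ = y)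
    (hS2 : ∀ x : T.domain, S (T x) = (x : H)) :
    ∀ y : H, ‖S y‖ ^ 2 ≤ ‖S (S y)‖ * ‖y‖  := by
  intro y
  obtain ⟨hy, hTy⟩ := hS1 y
  obtain ⟨hyy, hTyy⟩ := hS1 (S y)
  have h1 : T (⟨S (S y), hyy⟩ : T.domain) ∈ T.domain := by rw [hTyy]; exact hy
  have := hpara ⟨S (S y), hyy⟩ h1
  have he : (⟨T ⟨S (S y), hyy⟩, h1⟩ : T.domain) = ⟨S y, hy⟩ := Subtype.ext hTyy
  rw [he, hTy, hTyy] at this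
  linarith [this]


end
end

section
/- Let T be a densely defined closed operator on a complex Hilbert space H such that T is invertible with bounded inverse T⁻¹, and suppose T⁻¹ is normaloid (its operator norm equals its spectral radius). If moreover the spectrum of T is empty, then a contradiction follows; hence the spectrum of T is nonempty. -/
open scoped InnerProductSpace
open LinearPMap

noncomputable section

variable {H : Type*} [NormedAddCommGroup H] [InnerProductSpace ℂ H] [CompleteSpace H]

/-!
If `σ(T) = ∅`, then for every `ν ≠ 0` the operator `T - ν⁻¹` has a bounded inverse `R`, and the
resolvent identity `ν⁻¹ S R = ν⁻¹ R S = R - S` shows that `ν⁻¹ + ν⁻² R` inverts `ν - S`. Hence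
`σ(S) ⊆ {0}` and the normaloid `S` has norm `r(S) = 0`; but `S ≠ 0` since `T S = 1` on a nonzero
space.
-/

theorem spectralRadius_eq_zero_of_spectrum_subset_zero {𝕜 A : Type*} [NormedField 𝕜] [Ring A]
    [Algebra 𝕜 A] {a : A} (h : spectrum 𝕜 a ⊆ {0}) : spectralRadius 𝕜 a = 0 :=
  nonpos_iff_eq_zero.mp <| iSup₂_le fun k hk => by simp [Set.mem_singleton_iff.mp (h hk)]

section InverseOfShift

variable {E : Type*} [NormedAddCommGroup E] [InnerProductSpace ℂ E] {T : E →ₗ.[ℂ] E}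
  {S R : E →L[ℂ] E} {μ : ℂ}

theorem smul_mul_eq_sub_of_rightInverse_shiftOp (hS : ∀ x : T.domain, S (T x) = x)
    (hR : ∀ y, ∃ hy : R y ∈ (shiftOp T μ).domain, shiftOp T μ ⟨R y, hy⟩ = y) :
    μ • (S * R) = R - S := by
  ext y
  obtain ⟨hy, hRy⟩ := hR y
  have hTR : T ⟨R y, hy⟩ = y + μ • R y := sub_eq_iff_eq_add.mp hRy
  have hSTR := hS ⟨R y, hy⟩
  rw [hTR, _root_.map_add, _root_.map_smul] at hSTR
  show μ • S (R y) = R y - S y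
  exact eq_sub_of_add_eq' hSTR

theorem smul_mul_eq_sub_of_leftInverse_shiftOp
    (hS : ∀ y, ∃ hy : S y ∈ T.domain, T ⟨S y, hy⟩ = y)
    (hR : ∀ x : (shiftOp T μ).domain, R (shiftOp T μ x) = x) :
    μ • (R * S) = R - S := by
  ext y
  obtain ⟨hy, hTS⟩ := hS y
  have hRTS : R (T ⟨S y, hy⟩ - μ • S y) = S y := hR ⟨S y, hy⟩
  rw [hTS, _root_.map_sub, _root_.map_smul] at hRTS
  show μ • R (S y) = R y - S y
  exact (sub_eq_iff_comm.mp hRTS).symm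

theorem notMem_spectrum_of_hasBoundedInverse_shiftOp_inv
    (hS₁ : ∀ y, ∃ hy : S y ∈ T.domain, T ⟨S y, hy⟩ = y) (hS₂ : ∀ x : T.domain, S (T x) = x)
    {ν : ℂ} (hν : ν ≠ 0) (h : HasBoundedInverse (shiftOp T ν⁻¹)) : ν ∉ spectrum ℂ S := by
  obtain ⟨R, hR₁, hR₂⟩ := h
  have hSR := smul_mul_eq_sub_of_rightInverse_shiftOp hS₂ hR₁
  have hRS := smul_mul_eq_sub_of_leftInverse_shiftOp hS₁ hR₂
  rw [spectrum.mem_iff, not_not, Algebra.algebraMap_eq_smul_one, isUnit_iff_exists]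
  refine ⟨ν⁻¹ • 1 + ν⁻¹ ^ 2 • R, ?_, ?_⟩
  · simp only [sub_mul, mul_add, mul_smul_comm, smul_mul_assoc, one_mul, mul_one]
    linear_combination (norm := match_scalars <;> field_simp <;> ring) (-ν⁻¹) • hSR
  · simp only [add_mul, mul_sub, mul_smul_comm, smul_mul_assoc, one_mul, mul_one]
    linear_combination (norm := match_scalars <;> field_simp <;> ring) (-ν⁻¹) • hRS

theorem spectrum_subset_zero_of_pSpectrum_eq_empty
    (hS₁ : ∀ y, ∃ hy : S y ∈ T.domain, T ⟨S y, hy⟩ = y) (hS₂ : ∀ x : T.domain, S (T x) = x)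
    (h : pSpectrum T = ∅) : spectrum ℂ S ⊆ {0} := by
  intro ν hν
  by_contra hν₀
  have hresolvent : ν⁻¹ ∉ pSpectrum T := h ▸ Set.notMem_empty _
  exact notMem_spectrum_of_hasBoundedInverse_shiftOp_inv hS₁ hS₂ hν₀ (not_not.mp hresolvent) hν

theorem ne_zero_of_rightInverse [Nontrivial E]
    (hS : ∀ y, ∃ hy : S y ∈ T.domain, T ⟨S y, hy⟩ = y) : S ≠ 0 := by
  rintro rfl
  obtain ⟨y, hy⟩ := exists_ne (0 : E)
  obtain ⟨_, hTy⟩ := hS y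
  exact hy (hTy.symm.trans T.map_zero)

end InverseOfShift

theorem stmt3_general [Nontrivial H] (T : H →ₗ.[ℂ] H) (S : H →L[ℂ] H)
    (hS1 : ∀ y : H, ∃ hy : S y ∈ T.domain, T ⟨S y, hy⟩ = y)
    (hS2 : ∀ x : T.domain, S (T x) = (x : H))
    (hnormaloid : (‖S‖₊ : ENNReal) = spectralRadius ℂ S) :
    (pSpectrum T).Nonempty := by
  by_contra hempty
  have hσ : spectrum ℂ S ⊆ {0} :=
    spectrum_subset_zero_of_pSpectrum_eq_empty hS1 hS2 (Set.not_nonempty_iff_eq_empty.mp hempty)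
  have hS₀ : ‖S‖₊ = 0 := by
    exact_mod_cast hnormaloid.trans (spectralRadius_eq_zero_of_spectrum_subset_zero hσ)
  exact ne_zero_of_rightInverse hS1 (nnnorm_eq_zero.mp hS₀)

/-- If a densely defined closed operator `T` on a nonzero Hilbert space is invertible with
bounded normaloid inverse, then `σ(T)` is nonempty. -/
theorem stmt3 [Nontrivial H] (T : H →ₗ.[ℂ] H) (hdense : Dense (T.domain : Set H))
    (hclosed : T.IsClosed) (S : H →L[ℂ] H)
    (hS1 : ∀ y : H, ∃ hy : S y ∈ T.domain, T ⟨S y, hy⟩ = y)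
    (hS2 : ∀ x : T.domain, S (T x) = (x : H))
    (hnormaloid : (‖S‖₊ : ENNReal) = spectralRadius ℂ S) :
    (pSpectrum T).Nonempty :=
  stmt3_general T S hS1 hS2 hnormaloid

end
end

section
/- If U is a bounded operator on a Hilbert space M with σ(U) = {1} and U paranormal, then U is unitary and U = I, hence U − I = 0. -/
open scoped InnerProductSpace
open Filter
open scoped NNReal ENNReal

/-- A paranormal operator whose spectral radius is at most 1 is a contraction. -/
lemma aux_paranormal_contraction {M : Type*} [NormedAddCommGroup M] [InnerProductSpace ℂ M]
    [CompleteSpace M] (W : M →L[ℂ] M) (hr : spectralRadius ℂ W ≤ 1)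
    (hp : ∀ x : M, ‖W x‖ ^ 2 ≤ ‖W (W x)‖ * ‖x‖) (x : M) : ‖W x‖ ≤ ‖x‖ := by
  by_cases hx : x = 0
  · simp [hx]
  have hxpos : 0 < ‖x‖ := norm_pos_iff.mpr hx
  -- step lemma: ‖Wx‖ * ‖Wⁿx‖ ≤ ‖x‖ * ‖Wⁿ⁺¹x‖
  have happ : ∀ n : ℕ, (W ^ (n + 1)) x = W ((W ^ n) x) := by
    intro n
    rw [pow_succ']
    rfl
  have Q : ∀ n : ℕ, ‖W x‖ * ‖(W ^ n) x‖ ≤ ‖x‖ * ‖(W ^ (n + 1)) x‖ := by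
    intro n
    induction n with
    | zero => simp [happ, mul_comm]
    | succ n ih =>
      by_cases h : (W ^ (n + 1)) x = 0
      · have h0 : ‖W x‖ * ‖(W ^ (n + 1)) x‖ = 0 := by rw [h]; simp
        rw [h0]
        positivity
      have hn : (W ^ n) x ≠ 0 := by
        intro h0
        exact h (by rw [happ, h0, map_zero])
      have hnpos : 0 < ‖(W ^ n) x‖ := norm_pos_iff.mpr hn
      have h1pos : 0 < ‖(W ^ (n + 1)) x‖ := norm_pos_iff.mpr h
      have hpn := hp ((W ^ n) x)
      rw [← happ, ← happ] at hpn
      -- hpn : ‖W^(n+1) x‖² ≤ ‖W^(n+2) x‖ * ‖Wⁿ x‖   (note : happ twice)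
      have h2 : (W ^ (n + 1 + 1)) x = W (W ((W ^ n) x)) := by rw [happ, happ]
      rw [h2] at hpn ⊢
      nlinarith [norm_nonneg (W x), norm_nonneg x, norm_nonneg (W (W ((W ^ n) x)))]
  have P : ∀ n : ℕ, ‖W x‖ ^ n * ‖x‖ ≤ ‖(W ^ n) x‖ * ‖x‖ ^ n := by
    intro n
    induction n with
    | zero => simp
    | succ n ih =>
      have := Q n
      calc ‖W x‖ ^ (n + 1) * ‖x‖ = ‖W x‖ * (‖W x‖ ^ n * ‖x‖) := by ring
        _ ≤ ‖W x‖ * (‖(W ^ n) x‖ * ‖x‖ ^ n) := by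
            have h0 : (0:ℝ) ≤ ‖W x‖ := norm_nonneg _
            nlinarith
        _ = (‖W x‖ * ‖(W ^ n) x‖) * ‖x‖ ^ n := by ring
        _ ≤ (‖x‖ * ‖(W ^ (n + 1)) x‖) * ‖x‖ ^ n := by
            have h0 : (0:ℝ) ≤ ‖x‖ ^ n := by positivity
            nlinarith
        _ = ‖(W ^ (n + 1)) x‖ * ‖x‖ ^ (n + 1) := by ring
  -- deduce ‖Wx‖ⁿ ≤ ‖Wⁿ‖ ‖x‖ⁿ
  have hnorm : ∀ n : ℕ, ‖W x‖ ^ n ≤ ‖W ^ n‖ * ‖x‖ ^ n := by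
    intro n
    have h1 : ‖(W ^ n) x‖ ≤ ‖W ^ n‖ * ‖x‖ := (W ^ n).le_opNorm x
    have h2 := P n
    have h3 : ‖W x‖ ^ n * ‖x‖ ≤ ‖W ^ n‖ * ‖x‖ ^ n * ‖x‖ := by
      calc ‖W x‖ ^ n * ‖x‖ ≤ ‖(W ^ n) x‖ * ‖x‖ ^ n := h2
        _ ≤ (‖W ^ n‖ * ‖x‖) * ‖x‖ ^ n := by
            have : (0:ℝ) ≤ ‖x‖ ^ n := by positivity
            nlinarith
        _ = ‖W ^ n‖ * ‖x‖ ^ n * ‖x‖ := by ring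
    exact le_of_mul_le_mul_right h3 hxpos
  -- pass to ℝ≥0 and use Gelfand's formula
  set c : ℝ≥0 := ‖W x‖₊ / ‖x‖₊ with hc
  have hxne : ‖x‖₊ ≠ 0 := by simpa using hx
  have hcle : ∀ n : ℕ, c ^ n ≤ ‖W ^ n‖₊ := by
    intro n
    rw [hc, div_pow, div_le_iff₀ (pow_pos (pos_iff_ne_zero.mpr hxne) n)]
    have := hnorm n
    rw [← NNReal.coe_le_coe]
    push_cast
    linarith
  have hev : ∀ᶠ n : ℕ in atTop, (c : ENNReal) ≤ (‖W ^ n‖₊ : ENNReal) ^ (1 / (n:ℝ)) := by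
    filter_upwards [eventually_ge_atTop 1] with n hn
    have hne : (n : ℝ) ≠ 0 := by positivity
    have h1 : ((c : ENNReal) ^ n) ^ (1 / (n:ℝ)) ≤ ((‖W ^ n‖₊ : ENNReal)) ^ (1 / (n:ℝ)) := by
      apply ENNReal.rpow_le_rpow _ (by positivity)
      exact_mod_cast hcle n
    calc (c : ENNReal) = ((c : ENNReal) ^ n) ^ (1 / (n:ℝ)) := by
          rw [← ENNReal.rpow_natCast, ← ENNReal.rpow_mul, mul_one_div_cancel hne,
            ENNReal.rpow_one]
      _ ≤ _ := h1
  have hlim := spectrum.pow_nnnorm_pow_one_div_tendsto_nhds_spectralRadius W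
  have hcle1 : (c : ENNReal) ≤ 1 := le_trans (ge_of_tendsto hlim hev) hr
  have : c ≤ 1 := by exact_mod_cast hcle1
  rw [hc, div_le_one₀ (by positivity)] at this
  exact_mod_cast this

/-- A bounded paranormal operator with spectrum `{1}` is unitary and equals the identity. -/
theorem stmt5 {M : Type*} [NormedAddCommGroup M] [InnerProductSpace ℂ M] [CompleteSpace M]
    (U : M →L[ℂ] M) (hspec : spectrum ℂ U = {1})
    (hpara : ∀ x : M, ‖U x‖ ^ 2 ≤ ‖U (U x)‖ * ‖x‖) :
    (∀ x y : M, ⟪U x, U y⟫_ℂ = ⟪x, y⟫_ℂ) ∧ U = 1 ∧ U - 1 = 0 := by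
  -- spectral radius is 1
  have hr : spectralRadius ℂ U = 1 := by
    rw [spectralRadius, hspec]
    simp
  -- U is invertible
  have hunit : IsUnit U := by
    rw [← spectrum.zero_notMem_iff ℂ]
    rw [hspec]
    simp
  obtain ⟨u, hu⟩ := hunit
  set V : M →L[ℂ] M := ↑u⁻¹ with hV
  have hUV : ∀ y, U (V y) = y := by
    intro y
    have : U * V = 1 := by rw [← hu, hV]; exact u.mul_inv
    calc U (V y) = (U * V) y := rfl
      _ = y := by rw [this]; rfl
  have hVU : ∀ y, V (U y) = y := by
    intro y
    have : V * U = 1 := by rw [← hu, hV]; exact u.inv_mul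
    calc V (U y) = (V * U) y := rfl
      _ = y := by rw [this]; rfl
  -- spectrum of V
  have hspecV : spectrum ℂ V = {1} := by
    have := spectrum.map_inv (𝕜 := ℂ) u
    rw [hu, hspec] at this
    rw [hV, ← this]
    simp
  -- V is paranormal
  have hparaV : ∀ x : M, ‖V x‖ ^ 2 ≤ ‖V (V x)‖ * ‖x‖ := by
    intro x
    have := hpara (V (V x))
    rw [hUV, hUV] at this
    calc ‖V x‖ ^ 2 ≤ ‖x‖ * ‖V (V x)‖ := this
      _ = ‖V (V x)‖ * ‖x‖ := mul_comm _ _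
  -- both are contractions
  have hUc : ∀ x, ‖U x‖ ≤ ‖x‖ :=
    aux_paranormal_contraction U (le_of_eq hr) hpara
  have hVc : ∀ x, ‖V x‖ ≤ ‖x‖ :=
    aux_paranormal_contraction V (le_of_eq (by rw [spectralRadius, hspecV]; simp)) hparaV
  -- U is an isometry
  have hiso : ∀ x, ‖U x‖ = ‖x‖ := by
    intro x
    refine le_antisymm (hUc x) ?_
    calc ‖x‖ = ‖V (U x)‖ := by rw [hVU]
      _ ≤ ‖U x‖ := hVc (U x)
  have hadj : ContinuousLinearMap.adjoint U ∘L U = 1 :=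
    (ContinuousLinearMap.norm_map_iff_adjoint_comp_self U).mp hiso
  have hinner : ∀ x y : M, ⟪U x, U y⟫_ℂ = ⟪x, y⟫_ℂ :=
    (ContinuousLinearMap.inner_map_map_iff_adjoint_comp_self U).mpr hadj
  -- U is star-normal
  have hstar_mul : star U * U = 1 := hadj
  have hstar_eq : star U = V := by
    have hUV' : U * V = 1 := by rw [← hu, hV]; exact u.mul_inv
    calc star U = star U * (U * V) := by rw [hUV', mul_one]
      _ = (star U * U) * V := by rw [mul_assoc]
      _ = V := by rw [hstar_mul, one_mul]
  have hmul_star : U * star U = 1 := by rw [hstar_eq, ← hu, hV]; exact u.mul_inv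
  have hnormal : IsStarNormal U := ⟨by rw [Commute, SemiconjBy, hstar_mul, hmul_star]⟩
  -- U = 1 via the continuous functional calculus
  have hU1 : U = 1 := by
    calc U = cfc (id : ℂ → ℂ) U := (cfc_id ℂ U).symm
      _ = cfc (fun _ : ℂ => (1:ℂ)) U := by
          apply cfc_congr
          rw [hspec]
          intro z hz
          simpa using hz
      _ = 1 := cfc_const_one ℂ U
  exact ⟨hinner, hU1, by rw [hU1, sub_self]⟩
end

section
/- Let T be a densely defined closed paranormal operator in H with N(T) = N(T*). Then the minimum modulus m(T) = inf{‖Tx‖ : x ∈ D(T), ‖x‖ = 1} equals the distance from 0 to σ(T). -/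
open scoped InnerProductSpace
open LinearPMap

noncomputable section

variable {H : Type*} [NormedAddCommGroup H] [InnerProductSpace ℂ H] [CompleteSpace H]

/-!
If `T` has no bounded inverse, then `m(T) = 0`: otherwise `T` is bounded below, hence (being
closed) has closed range, whose orthogonal complement `N(T*) = N(T)` is trivial, so `T` would be
invertible. Then `0 ∈ σ(T)` and both sides vanish.

If `T` has a bounded inverse `S`, then `m(T) = ‖S‖⁻¹` and `σ(T) = {ν⁻¹ | 0 ≠ ν ∈ σ(S)}`. The
operator `S` is again paranormal, and a bounded paranormal operator is normaloid: iterating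
`‖Sy‖² ≤ ‖S²y‖‖y‖` gives `‖S‖ⁿ ≤ ‖Sⁿ‖`, so Gelfand's formula yields `r(S) = ‖S‖`. Hence some
`ν ∈ σ(S)` has `|ν| = ‖S‖`, and `|μ| ≥ ‖S‖⁻¹ = m(T)` for every `μ ∈ σ(T)`, with equality at `ν⁻¹`.
-/

open scoped ENNReal
open Filter

theorem spectralRadius_eq_nnnorm_of_nnnorm_pow_le {A : Type*} [NormedRing A] [NormedAlgebra ℂ A]
    [CompleteSpace A] [NormOneClass A] {a : A} (h : ∀ n : ℕ, ‖a‖₊ ^ (n + 1) ≤ ‖a ^ (n + 1)‖₊) :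
    spectralRadius ℂ a = ‖a‖₊ := by
  refine le_antisymm (spectrum.spectralRadius_le_nnnorm a) <|
    ge_of_tendsto (spectrum.pow_nnnorm_pow_one_div_tendsto_nhds_spectralRadius a) ?_
  filter_upwards [eventually_ne_atTop 0] with n hn
  obtain ⟨n, rfl⟩ := Nat.exists_eq_succ_of_ne_zero hn
  calc (‖a‖₊ : ℝ≥0∞) = ((‖a‖₊ : ℝ≥0∞) ^ (n + 1)) ^ (1 / (n + 1 : ℕ) : ℝ) := by
        rw [one_div, ENNReal.pow_rpow_inv_natCast n.succ_ne_zero]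
    _ ≤ (‖a ^ (n + 1)‖₊ : ℝ≥0∞) ^ (1 / (n + 1 : ℕ) : ℝ) := by
        gcongr
        exact_mod_cast h n

namespace ContinuousLinearMap

variable {𝕜 E : Type*} [NontriviallyNormedField 𝕜] [NormedAddCommGroup E] [NormedSpace 𝕜 E]

def IsParanormal (S : E →L[𝕜] E) : Prop :=
  ∀ y, ‖S y‖ ^ 2 ≤ ‖S (S y)‖ * ‖y‖

namespace IsParanormal

variable {S : E →L[𝕜] E}

theorem norm_apply_mul_norm_pow_apply_le (hS : S.IsParanormal) (y : E) (n : ℕ) :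
    ‖S y‖ * ‖(S ^ n) y‖ ≤ ‖y‖ * ‖(S ^ (n + 1)) y‖ := by
  induction n with
  | zero => simp [mul_comm]
  | succ n ih =>
    have hpara : ‖(S ^ (n + 1)) y‖ ^ 2 ≤ ‖(S ^ (n + 2)) y‖ * ‖(S ^ n) y‖ := by
      simpa only [FunLike.coe_pow_eq_iterate, Function.iterate_succ_apply'] using hS ((S ^ n) y)
    rcases (norm_nonneg ((S ^ (n + 1)) y)).eq_or_lt with h0 | hpos
    · rw [← h0, mul_zero]
      positivity
    refine le_of_mul_le_mul_right ?_ hpos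
    calc ‖S y‖ * ‖(S ^ (n + 1)) y‖ * ‖(S ^ (n + 1)) y‖
        = ‖S y‖ * ‖(S ^ (n + 1)) y‖ ^ 2 := by ring
      _ ≤ ‖S y‖ * (‖(S ^ (n + 2)) y‖ * ‖(S ^ n) y‖) := by gcongr
      _ = ‖S y‖ * ‖(S ^ n) y‖ * ‖(S ^ (n + 2)) y‖ := by ring
      _ ≤ ‖y‖ * ‖(S ^ (n + 1)) y‖ * ‖(S ^ (n + 2)) y‖ := by gcongr
      _ = ‖y‖ * ‖(S ^ (n + 2)) y‖ * ‖(S ^ (n + 1)) y‖ := by ring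

theorem norm_apply_pow_le (hS : S.IsParanormal) (y : E) (n : ℕ) :
    ‖S y‖ ^ (n + 1) ≤ ‖(S ^ (n + 1)) y‖ * ‖y‖ ^ n := by
  induction n with
  | zero => simp
  | succ n ih =>
    calc ‖S y‖ ^ (n + 2) = ‖S y‖ ^ (n + 1) * ‖S y‖ := pow_succ _ _
      _ ≤ ‖(S ^ (n + 1)) y‖ * ‖y‖ ^ n * ‖S y‖ := by gcongr
      _ = ‖y‖ ^ n * (‖S y‖ * ‖(S ^ (n + 1)) y‖) := by ring
      _ ≤ ‖y‖ ^ n * (‖y‖ * ‖(S ^ (n + 2)) y‖) :=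
        mul_le_mul_of_nonneg_left (hS.norm_apply_mul_norm_pow_apply_le y (n + 1)) (by positivity)
      _ = ‖(S ^ (n + 2)) y‖ * ‖y‖ ^ (n + 1) := by ring

theorem pow_norm_le_norm_pow (hS : S.IsParanormal) (n : ℕ) : ‖S‖ ^ (n + 1) ≤ ‖S ^ (n + 1)‖ := by
  set ρ := ‖S ^ (n + 1)‖ ^ ((n + 1 : ℕ)⁻¹ : ℝ)
  have hρ : ρ ^ (n + 1) = ‖S ^ (n + 1)‖ := Real.rpow_inv_natCast_pow (norm_nonneg _) n.succ_ne_zero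
  suffices ‖S‖ ≤ ρ by simpa only [hρ] using pow_le_pow_left₀ (norm_nonneg S) this (n + 1)
  refine opNorm_le_bound _ (by positivity) fun y => ?_
  refine le_of_pow_le_pow_left₀ n.succ_ne_zero (by positivity) ?_
  calc ‖S y‖ ^ (n + 1) ≤ ‖(S ^ (n + 1)) y‖ * ‖y‖ ^ n := hS.norm_apply_pow_le y n
    _ ≤ ‖S ^ (n + 1)‖ * ‖y‖ * ‖y‖ ^ n := by gcongr; exact le_opNorm _ _
    _ = (ρ * ‖y‖) ^ (n + 1) := by rw [mul_pow, hρ]; ring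

theorem spectralRadius_eq_nnnorm {E : Type*} [NormedAddCommGroup E] [NormedSpace ℂ E]
    [CompleteSpace E] [Nontrivial E] {S : E →L[ℂ] E} (hS : S.IsParanormal) :
    spectralRadius ℂ S = ‖S‖₊ :=
  spectralRadius_eq_nnnorm_of_nnnorm_pow_le fun n => by exact_mod_cast hS.pow_norm_le_norm_pow n

theorem exists_mem_spectrum_norm_eq {E : Type*} [NormedAddCommGroup E] [NormedSpace ℂ E]
    [CompleteSpace E] [Nontrivial E] {S : E →L[ℂ] E} (hS : S.IsParanormal) :
    ∃ ν ∈ spectrum ℂ S, ‖ν‖ = ‖S‖ := by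
  obtain ⟨ν, hν, hνS⟩ := spectrum.exists_nnnorm_eq_spectralRadius S
  rw [hS.spectralRadius_eq_nnnorm, ENNReal.coe_inj] at hνS
  exact ⟨ν, hν, congrArg NNReal.toReal hνS⟩

end IsParanormal

end ContinuousLinearMap

namespace LinearPMap

variable {𝕜 E F : Type*} [RCLike 𝕜] [NormedAddCommGroup E] [NormedSpace 𝕜 E]
  [NormedAddCommGroup F] [NormedSpace 𝕜 F]

def IsBoundedInverse (T : E →ₗ.[𝕜] F) (S : F →L[𝕜] E) : Prop :=
  (∀ y : F, ∃ hy : S y ∈ T.domain, T ⟨S y, hy⟩ = y) ∧ ∀ x : T.domain, S (T x) = (x : E)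

theorem isClosed_range_of_mul_norm_le [CompleteSpace E] [CompleteSpace F] {T : E →ₗ.[𝕜] F}
    (hT : T.IsClosed) {c : ℝ} (hc : 0 < c) (hlb : ∀ x : T.domain, c * ‖(x : E)‖ ≤ ‖T x‖) :
    _root_.IsClosed (LinearMap.range T.toFun : Set F) := by
  -- the range is the image of the complete space `graph T` under an antilipschitz projection
  have : CompleteSpace T.graph := hT.completeSpace_coe
  let f : T.graph →L[𝕜] F := (ContinuousLinearMap.snd 𝕜 E F).comp T.graph.subtypeL
  have hf : AntilipschitzWith ⟨max c⁻¹ 1, by positivity⟩ f := by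
    refine AddMonoidHomClass.antilipschitz_of_bound f fun p => ?_
    obtain ⟨x, hx1, hx2⟩ := (T.mem_graph_iff).mp p.2
    have hfst : ‖(p : E × F).1‖ ≤ c⁻¹ * ‖(p : E × F).2‖ := by
      rw [← hx1, ← hx2, le_inv_mul_iff₀ hc]
      exact hlb x
    show max ‖(p : E × F).1‖ ‖(p : E × F).2‖ ≤ max c⁻¹ 1 * ‖(p : E × F).2‖
    refine max_le (hfst.trans ?_) (le_mul_of_one_le_left (norm_nonneg _) (le_max_right _ _))
    gcongr
    exact le_max_left _ _
  have hrange : Set.range f = LinearMap.range T.toFun := by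
    rw [← graph_map_snd_eq_range, Submodule.map_coe]
    ext y
    simp [f]
  rw [← hrange]
  exact hf.isClosed_range f.uniformContinuous

theorem exists_isBoundedInverse_of_range_eq_top {T : E →ₗ.[𝕜] F}
    (hT : LinearMap.range T.toFun = ⊤) {c : ℝ} (hc : 0 < c)
    (hlb : ∀ x : T.domain, c * ‖(x : E)‖ ≤ ‖T x‖) : ∃ S, T.IsBoundedInverse S := by
  have hinj : Function.Injective T.toFun := by
    refine LinearMap.ker_eq_bot.mp (LinearMap.ker_eq_bot'.mpr fun x hx => ?_)
    have hx0 : c * ‖(x : E)‖ ≤ 0 := by simpa [← toFun_eq_coe, hx] using hlb x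
    exact Subtype.ext (norm_le_zero_iff.mp (nonpos_of_mul_nonpos_right hx0 hc))
  let e := LinearEquiv.ofBijective T.toFun ⟨hinj, LinearMap.range_eq_top.mp hT⟩
  let S : F →L[𝕜] E := (T.domain.subtype ∘ₗ e.symm.toLinearMap).mkContinuous c⁻¹ fun y => by
    rw [LinearMap.comp_apply, Submodule.subtype_apply, le_inv_mul_iff₀ hc]
    exact (hlb (e.symm y)).trans_eq (congrArg norm (e.apply_symm_apply y))
  exact ⟨S, fun y => ⟨(e.symm y).2, e.apply_symm_apply y⟩,
    fun x => congrArg Subtype.val (e.symm_apply_apply x)⟩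

def minModulus (T : E →ₗ.[𝕜] F) : ℝ :=
  sInf ((fun x : T.domain => ‖T x‖) '' {x : T.domain | ‖(x : E)‖ = 1})

variable {T : E →ₗ.[𝕜] F}

theorem minModulus_nonneg : 0 ≤ T.minModulus :=
  Real.sInf_nonneg (by rintro _ ⟨x, -, rfl⟩; exact norm_nonneg _)

theorem minModulus_mul_norm_le (x : T.domain) : T.minModulus * ‖(x : E)‖ ≤ ‖T x‖ := by
  rcases eq_or_ne (x : E) 0 with hx | hx
  · rw [hx, norm_zero, mul_zero]
    exact norm_nonneg _
  have hu : ‖(‖(x : E)‖⁻¹ : 𝕜) • (x : E)‖ = 1 := norm_smul_inv_norm hx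
  have hmin : T.minModulus ≤ ‖T ((‖(x : E)‖⁻¹ : 𝕜) • x)‖ :=
    csInf_le ⟨0, by rintro _ ⟨y, -, rfl⟩; exact norm_nonneg _⟩ ⟨_, hu, rfl⟩
  rw [T.map_smul, norm_smul, norm_inv, RCLike.norm_ofReal, abs_norm] at hmin
  rwa [le_inv_mul_iff₀ (norm_pos_iff.mpr hx), mul_comm] at hmin

theorem minModulus_of_subsingleton [Subsingleton E] : T.minModulus = 0 := by
  have hsphere : {x : T.domain | ‖(x : E)‖ = 1} = ∅ :=
    Set.eq_empty_of_forall_notMem fun x hx => by simp [Subsingleton.elim (x : E) 0] at hx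
  rw [minModulus, hsphere, Set.image_empty, Real.sInf_empty]

theorem IsBoundedInverse.ne_zero [Nontrivial F] {S : F →L[𝕜] E} (hS : T.IsBoundedInverse S) :
    S ≠ 0 := by
  rintro rfl
  obtain ⟨y, hy⟩ := exists_ne (0 : F)
  obtain ⟨h, hT⟩ := hS.1 y
  have h0 : (⟨(0 : F →L[𝕜] E) y, h⟩ : T.domain) = 0 := Subtype.ext rfl
  rw [h0, map_zero] at hT
  exact hy hT.symm

theorem IsBoundedInverse.minModulus_eq_inv_norm [Nontrivial F] {S : F →L[𝕜] E}
    (hS : T.IsBoundedInverse S) : T.minModulus = ‖S‖⁻¹ := by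
  have hS0 : 0 < ‖S‖ := norm_pos_iff.mpr hS.ne_zero
  obtain ⟨y, hy⟩ := exists_ne (0 : F)
  obtain ⟨hSy, hTSy⟩ := hS.1 y
  have hSy0 : S y ≠ 0 := fun h => hy <| by
    rw [← hTSy, ← map_zero T]
    exact congrArg T (Subtype.ext h)
  have hu : ‖(‖S y‖⁻¹ : 𝕜) • S y‖ = 1 := norm_smul_inv_norm hSy0
  refine le_antisymm ?_ (le_csInf ⟨_, (‖S y‖⁻¹ : 𝕜) • ⟨S y, hSy⟩, hu, rfl⟩ ?_)
  · have hbound : ‖(T.minModulus : 𝕜) • S‖ ≤ 1 :=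
      ContinuousLinearMap.opNorm_le_bound _ zero_le_one fun z => by
        obtain ⟨hz, hTz⟩ := hS.1 z
        change ‖(T.minModulus : 𝕜) • S z‖ ≤ 1 * ‖z‖
        rw [norm_smul, RCLike.norm_ofReal, abs_of_nonneg minModulus_nonneg, one_mul]
        exact (T.minModulus_mul_norm_le ⟨S z, hz⟩).trans_eq (congrArg norm hTz)
    rw [norm_smul, RCLike.norm_ofReal, abs_of_nonneg minModulus_nonneg, mul_comm] at hbound
    rwa [← mul_one ‖S‖⁻¹, le_inv_mul_iff₀ hS0]
  · rintro _ ⟨x, hx, rfl⟩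
    rw [inv_le_iff_one_le_mul₀' hS0]
    calc 1 = ‖S (T x)‖ := by rw [hS.2 x, hx]
      _ ≤ ‖S‖ * ‖T x‖ := S.le_opNorm _

end LinearPMap

theorem shiftOp_zero (T : H →ₗ.[ℂ] H) : shiftOp T 0 = T := by
  simp [shiftOp]

theorem zero_mem_pSpectrum_iff {T : H →ₗ.[ℂ] H} :
    (0 : ℂ) ∈ pSpectrum T ↔ ¬ HasBoundedInverse T := by
  rw [pSpectrum, Set.mem_ofPred_eq, shiftOp_zero]

theorem pSpectrum_eq_empty_of_subsingleton [Subsingleton H] (T : H →ₗ.[ℂ] H) : pSpectrum T = ∅ :=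
  Set.eq_empty_of_forall_notMem fun μ hμ => hμ
    ⟨0, fun y => ⟨by simp [(shiftOp T μ).domain.zero_mem], Subsingleton.elim _ _⟩,
      fun _ => Subsingleton.elim _ _⟩

namespace LinearPMap

variable {T : H →ₗ.[ℂ] H}

theorem mem_kernelSet_adjoint_of_mem_orthogonal (hdense : Dense (T.domain : Set H)) {y : H}
    (hy : y ∈ (LinearMap.range T.toFun)ᗮ) :
    y ∈ kernelSet (T†) 0 := by
  have hinner : ∀ x : T.domain, ⟪(0 : H), (x : H)⟫_ℂ = ⟪y, T x⟫_ℂ := fun x => by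
    rw [inner_zero_left, ← (Submodule.mem_orthogonal' _ y).mp hy _ (LinearMap.mem_range_self _ x)]
    rfl
  have hdom : y ∈ T†.domain := mem_adjoint_domain_of_exists y ⟨0, hinner⟩
  exact ⟨hdom, by rw [adjoint_apply_eq hdense ⟨y, hdom⟩ hinner, zero_smul]⟩

theorem range_eq_top_of_mul_norm_le (hdense : Dense (T.domain : Set H)) (hclosed : T.IsClosed)
    (hker : kernelSet T 0 = kernelSet (T†) 0) {c : ℝ} (hc : 0 < c)
    (hlb : ∀ x : T.domain, c * ‖(x : H)‖ ≤ ‖T x‖) : LinearMap.range T.toFun = ⊤ := by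
  have : CompleteSpace (LinearMap.range T.toFun) :=
    (isClosed_range_of_mul_norm_le hclosed hc hlb).completeSpace_coe
  rw [← Submodule.orthogonal_eq_bot_iff, Submodule.eq_bot_iff]
  intro y hy
  obtain ⟨hyT, hTy⟩ : y ∈ kernelSet T 0 := hker ▸ mem_kernelSet_adjoint_of_mem_orthogonal hdense hy
  have hy0 := hlb ⟨y, hyT⟩
  rw [hTy, zero_smul, norm_zero] at hy0
  exact norm_le_zero_iff.mp (nonpos_of_mul_nonpos_right hy0 hc)

theorem hasBoundedInverse_of_minModulus_pos (hdense : Dense (T.domain : Set H))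
    (hclosed : T.IsClosed)
    (hker : kernelSet T 0 = kernelSet (T†) 0) (hm : 0 < T.minModulus) : HasBoundedInverse T :=
  exists_isBoundedInverse_of_range_eq_top
    (range_eq_top_of_mul_norm_le hdense hclosed hker hm minModulus_mul_norm_le) hm
    minModulus_mul_norm_le

variable {S : H →L[ℂ] H}

theorem IsBoundedInverse.hasBoundedInverse (hS : T.IsBoundedInverse S) : HasBoundedInverse T :=
  ⟨S, hS⟩

theorem IsBoundedInverse.one_sub_smul_apply (hS : T.IsBoundedInverse S) (μ : ℂ) (x : T.domain) :
    (1 - μ • S) (T x) = shiftOp T μ x := by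
  change _ = T x - μ • (x : H)
  simp [hS.2 x]

/-- `(T - μ)⁻¹ = S (1 - μS)⁻¹`, and conversely `(1 - μS)⁻¹ = 1 + μ (T - μ)⁻¹`. -/
theorem IsBoundedInverse.hasBoundedInverse_shiftOp_iff (hS : T.IsBoundedInverse S) (μ : ℂ) :
    HasBoundedInverse (shiftOp T μ) ↔ IsUnit (1 - μ • S) := by
  constructor
  · rintro ⟨B, hB₁, hB₂⟩
    choose hBdom hTB using hB₁
    have hSB : ∀ y, S (y + μ • B y) = B y := fun y => by
      have hT : T ⟨B y, hBdom y⟩ = y + μ • B y := eq_add_of_sub_eq (hTB y)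
      rw [← hT, hS.2]
    refine ⟨⟨1 - μ • S, 1 + μ • B, ?_, ?_⟩, rfl⟩
    · ext y
      simp [hSB]
    · ext y
      obtain ⟨hy, hTy⟩ := hS.1 y
      have hA := hS.one_sub_smul_apply μ ⟨S y, hy⟩
      rw [hTy] at hA
      have hBA : B ((1 - μ • S) y) = S y := by rw [hA]; exact hB₂ ⟨S y, hy⟩
      calc ((1 + μ • B) * (1 - μ • S)) y = (1 - μ • S) y + μ • B ((1 - μ • S) y) := rfl
        _ = y := by rw [hBA]; simp
  · rintro ⟨u, hu⟩
    set R : H →L[ℂ] H := ↑u⁻¹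
    have hRA : ∀ z, R ((1 - μ • S) z) = z := fun z => by
      rw [← hu, ← mul_apply_eq_comp, u.inv_mul, one_apply_eq_self]
    have hAR : ∀ z, (1 - μ • S) (R z) = z := fun z => by
      rw [← hu, ← mul_apply_eq_comp, u.mul_inv, one_apply_eq_self]
    refine ⟨S ∘L R, fun y => ?_, fun x => ?_⟩
    · obtain ⟨hy, hTy⟩ := hS.1 (R y)
      refine ⟨hy, ?_⟩
      have hA := hS.one_sub_smul_apply μ ⟨_, hy⟩
      rw [hTy, hAR] at hA
      exact hA.symm
    · change S (R (shiftOp T μ x)) = x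
      rw [← hS.one_sub_smul_apply μ x, hRA]
      exact hS.2 x

theorem IsBoundedInverse.mem_pSpectrum_iff (hS : T.IsBoundedInverse S) {μ : ℂ} :
    μ ∈ pSpectrum T ↔ μ ≠ 0 ∧ μ⁻¹ ∈ spectrum ℂ S := by
  rcases eq_or_ne μ 0 with rfl | hμ
  · simpa [zero_mem_pSpectrum_iff] using hS.hasBoundedInverse
  · have key := IsUnit.smul_sub_iff_sub_inv_smul (Units.mk0 μ⁻¹ (inv_ne_zero hμ)) S
    simp only [Units.smul_def, Units.val_inv_eq_inv_val, Units.val_mk0, inv_inv] at key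
    rw [pSpectrum, Set.mem_ofPred_eq, hS.hasBoundedInverse_shiftOp_iff, spectrum.mem_iff,
      Algebra.algebraMap_eq_smul_one, key]
    simp [hμ]

theorem IsBoundedInverse.isParanormal (hS : T.IsBoundedInverse S) (hT : Paranormal T) :
    S.IsParanormal := by
  intro y
  obtain ⟨h₁, hT₁⟩ := hS.1 y
  obtain ⟨h₂, hT₂⟩ := hS.1 (S y)
  have hmem : T ⟨S (S y), h₂⟩ ∈ T.domain := by rwa [hT₂]
  have key := hT ⟨S (S y), h₂⟩ hmem
  have hx : (⟨T ⟨S (S y), h₂⟩, hmem⟩ : T.domain) = ⟨S y, h₁⟩ := Subtype.ext hT₂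
  rw [hx, hT₁, hT₂] at key
  rwa [mul_comm] at key

end LinearPMap

theorem isLeast_norm_pSpectrum_minModulus [Nontrivial H] {T : H →ₗ.[ℂ] H}
    (hdense : Dense (T.domain : Set H)) (hclosed : T.IsClosed) (hpara : Paranormal T)
    (hker : kernelSet T 0 = kernelSet (T†) 0) :
    IsLeast ((‖·‖) '' pSpectrum T) T.minModulus := by
  by_cases hinv : HasBoundedInverse T
  · obtain ⟨S, hS⟩ : ∃ S, T.IsBoundedInverse S := hinv
    obtain ⟨ν, hν, hνS⟩ := (hS.isParanormal hpara).exists_mem_spectrum_norm_eq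
    have hν0 : ν ≠ 0 := norm_ne_zero_iff.mp (hνS ▸ norm_ne_zero_iff.mpr hS.ne_zero)
    rw [hS.minModulus_eq_inv_norm]
    refine ⟨⟨ν⁻¹, hS.mem_pSpectrum_iff.mpr ⟨inv_ne_zero hν0, by rwa [inv_inv]⟩, by
      rw [← hνS]; exact norm_inv ν⟩, ?_⟩
    rintro _ ⟨μ, hμ, rfl⟩
    obtain ⟨hμ0, hμS⟩ := hS.mem_pSpectrum_iff.mp hμ
    have hμS' := spectrum.norm_le_norm_of_mem hμS
    rw [norm_inv] at hμS'
    exact inv_le_of_inv_le₀ (norm_pos_iff.mpr hμ0) hμS'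
  · have hm : T.minModulus = 0 := by
      by_contra hm
      exact hinv (hasBoundedInverse_of_minModulus_pos hdense hclosed hker
        (minModulus_nonneg.lt_of_ne' hm))
    rw [hm]
    exact ⟨⟨0, zero_mem_pSpectrum_iff.mpr hinv, norm_zero⟩, fun _ ⟨μ, _, h⟩ => h ▸ norm_nonneg μ⟩

/-- For a densely defined closed paranormal operator with `N(T) = N(T*)`, the minimum modulus
equals the distance from `0` to the spectrum. -/
theorem stmt15 (T : H →ₗ.[ℂ] H) (hdense : Dense (T.domain : Set H)) (hclosed : T.IsClosed)
    (hpara : Paranormal T) (hker : kernelSet T 0 = kernelSet (T†) 0) :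
    sInf ((fun x : T.domain => ‖T x‖) '' {x : T.domain | ‖(x : H)‖ = 1}) =
      sInf ((fun μ : ℂ => ‖μ‖) '' pSpectrum T) := by
  rcases subsingleton_or_nontrivial H with _ | _
  · rw [pSpectrum_eq_empty_of_subsingleton, Set.image_empty, Real.sInf_empty]
    exact minModulus_of_subsingleton
  · exact (isLeast_norm_pSpectrum_minModulus hdense hclosed hpara hker).csInf_eq.symm

end
end

section
/- Let T be a densely defined closed paranormal operator in H. If λ₁ ≠ λ₂ are two isolated points of σ(T), then the eigenspaces N(T − λ₁I) and N(T − λ₂I) are orthogonal. -/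
/-!
Let `Tx = μ₁ x`, `Ty = μ₂ y` with `μ₂ ≠ 0`, and apply paranormality to `v = y + t c x` for real
`t > 0` and `c ∈ ℂ`. Then `t ↦ ‖T²v‖² ‖v‖² - ‖Tv‖⁴` is a polynomial that is nonnegative for
`t > 0` and vanishes at `t = 0`, so its derivative at `0`, which is
`2 ‖y‖² Re (c ⟪y, x⟫ conj(μ₂)² (μ₁ - μ₂)²)`, is nonnegative. As `c` is arbitrary, this forces
`⟪y, x⟫ = 0`.
-/

open scoped InnerProductSpace
open LinearPMap

noncomputable section

variable {H : Type*} [NormedAddCommGroup H] [InnerProductSpace ℂ H] [CompleteSpace H]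

open scoped ComplexConjugate

lemma two_mul_mul_le_of_forall_pos_sq_le_mul (A₀ A₁ A₂ B₀ B₁ B₂ C₀ C₁ C₂ : ℝ)
    (h₀ : B₀ ^ 2 = A₀ * C₀)
    (h : ∀ t : ℝ, 0 < t →
      (B₀ + B₁ * t + B₂ * t ^ 2) ^ 2 ≤ (A₀ + A₁ * t + A₂ * t ^ 2) * (C₀ + C₁ * t + C₂ * t ^ 2)) :
    2 * B₀ * B₁ ≤ A₀ * C₁ + A₁ * C₀ := by
  set G : ℝ → ℝ := fun t => (A₀ * C₁ + A₁ * C₀ - 2 * B₀ * B₁)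
      + t * (A₀ * C₂ + A₁ * C₁ + A₂ * C₀ - B₁ ^ 2 - 2 * B₀ * B₂)
      + t ^ 2 * (A₁ * C₂ + A₂ * C₁ - 2 * B₁ * B₂) + t ^ 3 * (A₂ * C₂ - B₂ ^ 2) with hG
  have hG_pos : ∀ t : ℝ, 0 < t → 0 ≤ G t := fun t ht => by
    have hgap : (A₀ + A₁ * t + A₂ * t ^ 2) * (C₀ + C₁ * t + C₂ * t ^ 2)
        - (B₀ + B₁ * t + B₂ * t ^ 2) ^ 2 = t * G t := by
      simp only [hG]; linear_combination -h₀
    nlinarith [h t ht]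
  have hG_zero : 0 ≤ G 0 :=
    ge_of_tendsto ((show Continuous G by fun_prop).tendsto 0 |>.mono_left nhdsWithin_le_nhds)
      (eventually_nhdsWithin_of_forall (s := Set.Ioi 0) hG_pos)
  simp only [hG] at hG_zero
  linarith

section InnerProductSpace

variable {𝕜 E : Type*} [RCLike 𝕜] [NormedAddCommGroup E] [InnerProductSpace 𝕜 E]

local notation "⟪" x ", " y "⟫" => inner 𝕜 x y

lemma norm_add_ofReal_smul_sq (u v : E) (t : ℝ) :
    ‖u + (t : 𝕜) • v‖ ^ 2 = ‖u‖ ^ 2 + 2 * RCLike.re ⟪u, v⟫ * t + ‖v‖ ^ 2 * t ^ 2 := by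
  rw [norm_add_sq (𝕜 := 𝕜), inner_smul_right, RCLike.re_ofReal_mul, norm_smul, RCLike.norm_ofReal,
    mul_pow, sq_abs]
  ring

lemma re_inner_le_of_forall_norm_sq_le_norm_mul_norm (p₀ p₁ q₀ q₁ r₀ r₁ : E)
    (h₀ : ‖q₀‖ ^ 2 = ‖p₀‖ * ‖r₀‖)
    (h : ∀ t : ℝ, 0 < t →
      ‖q₀ + (t : 𝕜) • q₁‖ ^ 2 ≤ ‖p₀ + (t : 𝕜) • p₁‖ * ‖r₀ + (t : 𝕜) • r₁‖) :
    2 * ‖q₀‖ ^ 2 * RCLike.re ⟪q₀, q₁⟫ ≤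
      ‖p₀‖ ^ 2 * RCLike.re ⟪r₀, r₁⟫ + RCLike.re ⟪p₀, p₁⟫ * ‖r₀‖ ^ 2 := by
  have := two_mul_mul_le_of_forall_pos_sq_le_mul
    (‖p₀‖ ^ 2) (2 * RCLike.re ⟪p₀, p₁⟫) (‖p₁‖ ^ 2) (‖q₀‖ ^ 2) (2 * RCLike.re ⟪q₀, q₁⟫) (‖q₁‖ ^ 2)
    (‖r₀‖ ^ 2) (2 * RCLike.re ⟪r₀, r₁⟫) (‖r₁‖ ^ 2) (by rw [h₀]; ring) fun t ht => by
      have := pow_le_pow_left₀ (by positivity) (h t ht) 2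
      rwa [mul_pow, norm_add_ofReal_smul_sq, norm_add_ofReal_smul_sq, norm_add_ofReal_smul_sq]
        at this
  linarith

end InnerProductSpace

lemma eq_zero_of_forall_re_mul_nonneg {K : ℂ} (h : ∀ c : ℂ, 0 ≤ (c * K).re) : K = 0 := by
  have := h (-conj K)
  rw [neg_mul, Complex.neg_re, ← Complex.normSq_eq_conj_mul_self, Complex.ofReal_re] at this
  exact Complex.normSq_eq_zero.mp (le_antisymm (by linarith) (Complex.normSq_nonneg K))

lemma LinearPMap.map_smul_add_smul_of_eigen {R M : Type*} [CommRing R] [AddCommGroup M]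
    [Module R M] {T : M →ₗ.[R] M} {μ₁ μ₂ : R} {x y : T.domain}
    (hx : T x = μ₁ • (x : M)) (hy : T y = μ₂ • (y : M)) (a b : R) :
    T (a • x + b • y) = (((a * μ₁) • x + (b * μ₂) • y : T.domain) : M) := by
  rw [LinearPMap.map_add, LinearPMap.map_smul, LinearPMap.map_smul, hx, hy]
  simp [smul_smul]

section Paranormal

variable {E : Type*} [NormedAddCommGroup E] [InnerProductSpace ℂ E]

lemma Paranormal.norm_sq_smul_add_smul_le {T : E →ₗ.[ℂ] E} (hT : Paranormal T) {μ₁ μ₂ : ℂ}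
    {x y : E} (hx : x ∈ kernelSet T μ₁) (hy : y ∈ kernelSet T μ₂) (a b : ℂ) :
    ‖(a * μ₁) • x + (b * μ₂) • y‖ ^ 2 ≤
      ‖(a * μ₁ ^ 2) • x + (b * μ₂ ^ 2) • y‖ * ‖a • x + b • y‖ := by
  obtain ⟨hxd, hTx⟩ := hx
  obtain ⟨hyd, hTy⟩ := hy
  set X : T.domain := ⟨x, hxd⟩
  set Y : T.domain := ⟨y, hyd⟩
  have hTv := LinearPMap.map_smul_add_smul_of_eigen hTx hTy a b
  have hTTv := LinearPMap.map_smul_add_smul_of_eigen hTx hTy (a * μ₁) (b * μ₂)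
  have := hT (a • X + b • Y) (hTv ▸ Submodule.coe_mem _)
  simp only [hTv, Subtype.coe_eta, hTTv] at this
  simpa [X, Y, mul_assoc, ← sq] using this

lemma Paranormal.inner_eq_zero_of_mem_kernelSet {T : E →ₗ.[ℂ] E} (hT : Paranormal T) {μ₁ μ₂ : ℂ}
    {x y : E} (hx : x ∈ kernelSet T μ₁) (hy : y ∈ kernelSet T μ₂) (hμ₂ : μ₂ ≠ 0) (hne : μ₁ ≠ μ₂) :
    ⟪y, x⟫_ℂ = 0 := by
  set K : ℂ := (‖y‖ ^ 2 : ℂ) * ⟪y, x⟫_ℂ * conj μ₂ ^ 2 * (μ₁ - μ₂) ^ 2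
  have hK : ∀ c : ℂ, 0 ≤ (c * K).re := fun c => by
    have hvar := re_inner_le_of_forall_norm_sq_le_norm_mul_norm (𝕜 := ℂ)
      (μ₂ ^ 2 • y) ((c * μ₁ ^ 2) • x) (μ₂ • y) ((c * μ₁) • x) y (c • x)
      (by rw [norm_smul, norm_smul, norm_pow]; ring) fun t ht => by
        convert hT.norm_sq_smul_add_smul_le hx hy (t * c) 1 using 3 <;> module
    have hre : c * K = (‖μ₂ ^ 2 • y‖ ^ 2 : ℂ) * ⟪y, c • x⟫_ℂ
        + ⟪μ₂ ^ 2 • y, (c * μ₁ ^ 2) • x⟫_ℂ * (‖y‖ ^ 2 : ℂ)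
        - 2 * (‖μ₂ • y‖ ^ 2 : ℂ) * ⟪μ₂ • y, (c * μ₁) • x⟫_ℂ := by
      simp only [K, inner_smul_left, inner_smul_right, norm_smul, mul_pow, Complex.ofReal_mul,
        ← Complex.mul_conj', map_pow]
      ring
    rw [hre]
    simp only [Complex.sub_re, Complex.add_re, ← Complex.ofReal_pow, Complex.re_ofReal_mul,
      Complex.re_mul_ofReal, ← Complex.ofReal_ofNat, ← Complex.ofReal_mul]
    rw [RCLike.re_to_complex, RCLike.re_to_complex, RCLike.re_to_complex] at hvar
    linarith
  have hK0 : K = 0 := eq_zero_of_forall_re_mul_nonneg hK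
  simp only [K, mul_eq_zero, pow_eq_zero_iff two_ne_zero, map_eq_zero, hμ₂, sub_eq_zero, hne,
    Complex.ofReal_eq_zero, norm_eq_zero, or_false] at hK0
  rcases hK0 with rfl | h
  · exact inner_zero_left x
  · exact h

end Paranormal

theorem stmt19_general (T : H →ₗ.[ℂ] H)
    (hpara : Paranormal T) (μ₁ μ₂ : ℂ) (hne : μ₁ ≠ μ₂) :
    ∀ x ∈ kernelSet T μ₁, ∀ y ∈ kernelSet T μ₂, ⟪x, y⟫_ℂ = 0 := by
  intro x hx y hy
  rcases eq_or_ne μ₂ 0 with rfl | hμ₂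
  · exact hpara.inner_eq_zero_of_mem_kernelSet hy hx hne hne.symm
  · exact inner_eq_zero_symm.mp (hpara.inner_eq_zero_of_mem_kernelSet hx hy hμ₂ hne)

/-- Eigenspaces of a densely defined closed paranormal operator at two distinct isolated
spectral points are orthogonal. -/
theorem stmt19 (T : H →ₗ.[ℂ] H) (hdense : Dense (T.domain : Set H)) (hclosed : T.IsClosed)
    (hpara : Paranormal T) (μ₁ μ₂ : ℂ) (hne : μ₁ ≠ μ₂)
    (h1 : IsolatedSpectralPoint T μ₁) (h2 : IsolatedSpectralPoint T μ₂) :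
    ∀ x ∈ kernelSet T μ₁, ∀ y ∈ kernelSet T μ₂, ⟪x, y⟫_ℂ = 0 :=
  stmt19_general T hpara μ₁ μ₂ hne

end
end
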